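/- arXiv:1407.6973 — 2 statements merged into one kernel-verified Lean document; each statement's English description precedes it below -/
import Mathlib

section
/- Let α, β, N be real numbers with α ∉ {−1,−2,−3,…}. Then for every integer n ≥ 0 and every real x with 2x+α+β+1 ≠ 0: (−(x+α+1)(x+α+β+1) R_{n−1}^{α+1,β,N−1}(λ^{α+1,β}(x)) + x(x+β) R_{n−1}^{α+1,β,N−1}(λ^{α+1,β}(x−1))) / ((α+1)(2x+α+β+1)) = R_n^{α,β,N}(λ^{α,β}(x)) − R_n^{α,β,N−1}(λ^{α,β}(x)), where λ^{α,β}(x) = x(x+α+β+1) and λ^{α+1,β}(x) = x(x+α+β+2). -/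
open Polynomial Finset

noncomputable section

/-- Pochhammer symbol `(a)_k = a(a+1)⋯(a+k−1)`. -/
def poch (a : ℝ) (k : ℕ) : ℝ := ∏ i ∈ Finset.range k, (a + i)

/-- The quadratic lattice `λ^{α,β}(x) = x(x+α+β+1)`. -/
def lam (α β x : ℝ) : ℝ := x * (x + α + β + 1)

/-- The dual Hahn polynomial `R_n^{α,β,N}`. -/
def dualHahn (α β N : ℝ) (n : ℕ) : Polynomial ℝ :=
  Polynomial.C ((n.factorial : ℝ))⁻¹ *
    ∑ j ∈ Finset.range (n + 1),
      Polynomial.C ((-1 : ℝ) ^ j * poch (-(n : ℝ)) j * poch (-N + j) (n - j)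
          / (poch (α + 1) j * (j.factorial : ℝ))) *
        ∏ i ∈ Finset.range j, (Polynomial.X - Polynomial.C ((i : ℝ) * (α + β + 1 + i)))

/-- Dual Hahn polynomial with integer index; `R_k = 0` for `k < 0`. -/
def dualHahnZ (α β N : ℝ) (k : ℤ) : Polynomial ℝ :=
  if 0 ≤ k then dualHahn α β N k.toNat else 0

/-- The Hahn polynomial `h_n^{α,β,N}` evaluated at `x`. -/
def hahn (α β N : ℝ) (n : ℕ) (x : ℝ) : ℝ :=
  ∑ j ∈ Finset.range (n + 1),
    poch (-(n : ℝ)) j * poch ((n : ℝ) + α + β + 1) j * poch (-N + j) (n - j) *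
      poch (α + j + 1) (n - j) * poch (-x) j / (j.factorial : ℝ)

/-- The dual Hahn weight `w_{*;α,β,N}(x)`. -/
def dualHahnWeight (α β : ℝ) (N : ℕ) (x : ℕ) : ℝ :=
  (2 * (x : ℝ) + α + β + 1) * poch (α + 1) x * poch (-(N : ℝ)) x * (N.factorial : ℝ) /
    ((-1 : ℝ) ^ x * poch ((x : ℝ) + α + β + 1) (N + 1) * poch (β + 1) x * (x.factorial : ℝ))

@[simp] lemma poch_zero (a : ℝ) : poch a 0 = 1 := by simp [poch]

lemma poch_succ (a : ℝ) (j : ℕ) : poch a (j+1) = poch a j * (a + j) := by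
  simp [poch, Finset.prod_range_succ]

lemma poch_succ' (a : ℝ) (j : ℕ) : poch a (j+1) = a * poch (a+1) j := by
  rw [poch, Finset.prod_range_succ']
  simp only [Nat.cast_zero, add_zero, mul_comm]
  congr 1
  exact Finset.prod_congr rfl fun i _ => by push_cast; ring

lemma poch_shift (a : ℝ) (j : ℕ) : a * poch (a+1) j = poch a j * (a + j) := by
  rw [← poch_succ', poch_succ]

lemma poch_diff (a : ℝ) (k : ℕ) :
    poch a (k+1) - poch (a+1) (k+1) = -((k:ℝ)+1) * poch (a+1) k := by
  rw [poch_succ' a, poch_succ (a+1)]; ring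

lemma poch_ne_zero_of (a : ℝ) (j : ℕ) (h : ∀ i : ℕ, a + i ≠ 0) : poch a j ≠ 0 :=
  Finset.prod_ne_zero_iff.2 fun i _ => h i

lemma ffall_shift (x : ℝ) (j : ℕ) :
    x * ∏ i ∈ Finset.range j, (x - 1 - i) = (∏ i ∈ Finset.range j, (x - i)) * (x - j) := by
  have h1 : ∏ i ∈ Finset.range (j+1), (x - i) = (∏ i ∈ Finset.range j, (x - i)) * (x - j) :=
    Finset.prod_range_succ _ _
  have h2 : ∏ i ∈ Finset.range (j+1), (x - i) = x * ∏ i ∈ Finset.range j, (x - 1 - i) := by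
    rw [Finset.prod_range_succ']
    simp only [Nat.cast_zero, sub_zero, mul_comm]
    congr 1
    exact Finset.prod_congr rfl fun i _ => by push_cast; ring
  rw [← h2, h1]

lemma dualHahn_eval (α β N x : ℝ) (n : ℕ) :
    (dualHahn α β N n).eval (lam α β x) =
      ((n.factorial : ℝ))⁻¹ * ∑ j ∈ Finset.range (n+1),
        ((-1 : ℝ)^j * poch (-(n:ℝ)) j * poch (-N + j) (n-j)
            / (poch (α+1) j * (j.factorial : ℝ))) *
          ∏ i ∈ Finset.range j, ((x - i) * (x + α + β + 1 + i)) := by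
  simp only [dualHahn, eval_mul, eval_C, eval_finset_sum, eval_prod, eval_sub, eval_X]
  congr 1
  refine Finset.sum_congr rfl fun j _ => ?_
  congr 1
  refine Finset.prod_congr rfl fun i _ => ?_
  simp [lam]; ring

set_option maxHeartbeats 4000000 in
/-- Action of the first `𝒟`-operator on dual Hahn polynomials, expressed through dual Hahn
polynomials with shifted parameters. -/
theorem dualHahn_shift_identity (α β N : ℝ) (hα : ∀ k : ℕ, α ≠ -1 - k)
    (n : ℕ) (x : ℝ) (hx : 2 * x + α + β + 1 ≠ 0) :
    (-((x + α + 1) * (x + α + β + 1)) *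
          (dualHahnZ (α + 1) β (N - 1) ((n : ℤ) - 1)).eval (lam (α + 1) β x) +
        x * (x + β) * (dualHahnZ (α + 1) β (N - 1) ((n : ℤ) - 1)).eval (lam (α + 1) β (x - 1))) /
      ((α + 1) * (2 * x + α + β + 1)) =
    (dualHahn α β N n).eval (lam α β x) - (dualHahn α β (N - 1) n).eval (lam α β x) := by
  have hα1 : α + 1 ≠ 0 := by
    have := hα 0; intro h; apply this; push_cast; linarith
  have hd : (α + 1) * (2 * x + α + β + 1) ≠ 0 := mul_ne_zero hα1 hx
  rcases n with _ | m
  · -- n = 0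
    simp only [Nat.cast_zero, zero_sub, dualHahnZ]
    norm_num [dualHahn_eval]
  · -- n = m + 1
    have hZ : dualHahnZ (α + 1) β (N - 1) ((↑(m+1) : ℤ) - 1) = dualHahn (α+1) β (N-1) m := by
      have h : ((↑(m+1) : ℤ) - 1) = (m : ℤ) := by push_cast; ring
      rw [h, dualHahnZ]; simp
    rw [hZ, div_eq_iff hd]
    simp only [dualHahn_eval]
    conv_rhs => rw [← mul_sub, ← Finset.sum_sub_distrib, Finset.sum_range_succ]
    simp only [Nat.sub_self, poch_zero, mul_one, sub_self, add_zero]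
    simp only [Finset.mul_sum, Finset.sum_mul]
    rw [← Finset.sum_add_distrib]
    refine Finset.sum_congr rfl fun j hj => ?_
    have hjm : j ≤ m := Nat.lt_succ_iff.mp (Finset.mem_range.mp hj)
    have hEA : (x+α+β+1) * ∏ i ∈ Finset.range j, ((x - ↑i) * (x + (α+1) + β + 1 + (i:ℝ))) =
        (∏ i ∈ Finset.range j, ((x - ↑i) * (x + α + β + 1 + (i:ℝ)))) * (x + α + β + 1 + ↑j) := by
      rw [Finset.prod_mul_distrib, Finset.prod_mul_distrib]
      have h1 : ∏ i ∈ Finset.range j, (x + (α+1) + β + 1 + (i:ℝ)) = poch (x+α+β+1+1) j := by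
        rw [poch]; exact Finset.prod_congr rfl fun i _ => by ring
      have h2 : ∏ i ∈ Finset.range j, (x + α + β + 1 + (i:ℝ)) = poch (x+α+β+1) j := by rw [poch]
      rw [h1, h2]
      linear_combination (∏ i ∈ Finset.range j, (x - (i:ℝ))) * poch_shift (x+α+β+1) j
    have hEB : x * ∏ i ∈ Finset.range j, ((x - 1 - ↑i) * (x - 1 + (α+1) + β + 1 + (i:ℝ))) =
        (∏ i ∈ Finset.range j, ((x - ↑i) * (x + α + β + 1 + (i:ℝ)))) * (x - ↑j) := by
      rw [Finset.prod_mul_distrib, Finset.prod_mul_distrib]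
      have h1 : ∏ i ∈ Finset.range j, (x - 1 + (α+1) + β + 1 + (i:ℝ)) = poch (x+α+β+1) j := by
        rw [poch]; exact Finset.prod_congr rfl fun i _ => by ring
      have h2 : ∏ i ∈ Finset.range j, (x + α + β + 1 + (i:ℝ)) = poch (x+α+β+1) j := by rw [poch]
      rw [h1, h2]
      linear_combination poch (x+α+β+1) j * ffall_shift x j
    trans ((m.factorial:ℝ))⁻¹ *
        ((-1:ℝ)^j * poch (-(m:ℝ)) j * poch (-(N-1)+↑j) (m-j) / (poch (α+1+1) j * (j.factorial:ℝ))) *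
        ((∏ i ∈ Finset.range j, ((x - ↑i) * (x + α + β + 1 + (i:ℝ)))) *
          (-((α+1+↑j)*(2*x+α+β+1))))
    · linear_combination
        (-(x+α+1)) * (((m.factorial:ℝ))⁻¹ *
          ((-1:ℝ)^j * poch (-(m:ℝ)) j * poch (-(N-1)+↑j) (m-j) /
            (poch (α+1+1) j * (j.factorial:ℝ)))) * hEA +
        (x+β) * (((m.factorial:ℝ))⁻¹ *
          ((-1:ℝ)^j * poch (-(m:ℝ)) j * poch (-(N-1)+↑j) (m-j) /
            (poch (α+1+1) j * (j.factorial:ℝ)))) * hEB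
    · rw [show m + 1 - j = m - j + 1 from by omega]
      rw [show -(N - 1) = -N + 1 from by ring]
      rw [Nat.factorial_succ]
      push_cast
      have hGN : poch (-N + (j:ℝ)) (m - j + 1) =
          poch (-N+1+(j:ℝ)) (m-j+1) - ((m:ℝ) - ↑j + 1) * poch (-N+1+(j:ℝ)) (m-j) := by
        have h := poch_diff (-N + (j:ℝ)) (m - j)
        rw [show (-N + (j:ℝ)) + 1 = -N + 1 + ↑j from by ring, Nat.cast_sub hjm] at h
        linear_combination h
      have hm1 : ((m:ℝ) + 1) ≠ 0 := by positivity
      have hM : poch (-(m:ℝ)) j = poch (-((m:ℝ)+1)) j * ((m:ℝ)+1 - ↑j) / ((m:ℝ)+1) := by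
        have h1 := poch_succ (-((m:ℝ)+1)) j
        have h2 := poch_succ' (-((m:ℝ)+1)) j
        rw [show -((m:ℝ)+1) + 1 = -(m:ℝ) from by ring] at h2
        rw [eq_div_iff hm1]; linear_combination h2 - h1
      have hP2 : poch (α+1+1) j = poch (α+1) j * (α+1+(j:ℝ)) / (α+1) := by
        rw [eq_div_iff hα1]; linear_combination poch_shift (α+1) j
      have hP1 : poch (α+1) j ≠ 0 := by
        refine poch_ne_zero_of _ _ fun i => ?_
        have := hα i; intro hcontra; apply this; linarith
      have hjf : ((j.factorial:ℕ):ℝ) ≠ 0 := Nat.cast_ne_zero.2 j.factorial_ne_zero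
      have hmf : ((m.factorial:ℕ):ℝ) ≠ 0 := Nat.cast_ne_zero.2 m.factorial_ne_zero
      have hαj : α + 1 + (j:ℝ) ≠ 0 := by
        have := hα j; intro h; apply this; linarith
      rw [hGN, hM, hP2]
      field_simp
      ring

end
end

section
/- Let α, β, N be real numbers with α ∉ {−1,−2,−3,…}. Then for every integer n ≥ 1 and every real x: R_n^{α,β,N}(λ^{α,β}(x+1)) − R_n^{α,β,N}(λ^{α,β}(x)) = ((2x+α+β+2)/(α+1)) · R_{n−1}^{α+1,β,N−1}(λ^{α+1,β}(x)), where λ^{α,β}(x) = x(x+α+β+1) and λ^{α+1,β}(x) = x(x+α+β+2). -/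
open Polynomial Finset

noncomputable section

/-!
In the Newton basis (`nodeProd`)
`P_j(x) = ∏_{i<j} (λ(x) − λ(i)) = ∏_{i<j} (x − i)(x + i + α + β + 1)` the forward difference
acts as a lowering operator that also shifts `α` to `α + 1`:
`P_{j+1}(x+1) − P_{j+1}(x) = (j+1)(2x + α + β + 2) P_j^{α+1}(x)`, because both terms share the
factor `P_j^{α+1}(x)` and differ in the cofactors `(x+1)(x+j+α+β+2)` and `(x−j)(x+α+β+1)`.
The theorem then reduces to a termwise identity between the coefficients of `R_n^{α,β,N}` and
`R_{n−1}^{α+1,β,N−1}`, which is Pochhammer bookkeeping.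
-/

lemma poch_succ_left (a : ℝ) (k : ℕ) : poch a (k + 1) = a * poch (a + 1) k := by
  rw [poch, prod_range_succ', mul_comm, poch]
  push_cast
  simp only [add_zero, add_assoc, add_comm (1 : ℝ)]

section Nodes

variable (α β : ℝ)

lemma lam_sub_lam (x y : ℝ) : lam α β x - lam α β y = (x - y) * (x + y + α + β + 1) := by
  unfold lam; ring

def nodeProd (j : ℕ) (x : ℝ) : ℝ := ∏ i ∈ range j, (lam α β x - lam α β i)

lemma nodeProd_eq_prod_mul_prod (j : ℕ) (x : ℝ) :
    nodeProd α β j x = (∏ i ∈ range j, (x - i)) * ∏ i ∈ range j, (x + i + α + β + 1) := by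
  simp only [nodeProd, lam_sub_lam, prod_mul_distrib]

lemma nodeProd_zero (x : ℝ) : nodeProd α β 0 x = 1 := prod_range_zero _

lemma nodeProd_succ (j : ℕ) (x : ℝ) :
    nodeProd α β (j + 1) x = (x - j) * (x + α + β + 1) * nodeProd (α + 1) β j x := by
  rw [nodeProd_eq_prod_mul_prod, nodeProd_eq_prod_mul_prod, prod_range_succ (fun i : ℕ => x - i),
    prod_range_succ' (fun i : ℕ => x + i + α + β + 1)]
  have hshift : ∏ i ∈ range j, (x + ((i + 1 : ℕ) : ℝ) + α + β + 1) =
      ∏ i ∈ range j, (x + i + (α + 1) + β + 1) :=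
    prod_congr rfl fun i _ => by push_cast; ring
  rw [hshift]
  push_cast
  ring

lemma nodeProd_succ_add_one (j : ℕ) (x : ℝ) :
    nodeProd α β (j + 1) (x + 1) = (x + 1) * (x + j + α + β + 2) * nodeProd (α + 1) β j x := by
  rw [nodeProd_eq_prod_mul_prod, nodeProd_eq_prod_mul_prod,
    prod_range_succ' (fun i : ℕ => x + 1 - i), prod_range_succ (fun i : ℕ => x + 1 + i + α + β + 1)]
  have hshift : ∏ i ∈ range j, (x + 1 - ((i + 1 : ℕ) : ℝ)) = ∏ i ∈ range j, (x - i) :=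
    prod_congr rfl fun i _ => by push_cast; ring
  have hshift' : ∏ i ∈ range j, (x + 1 + i + α + β + 1) =
      ∏ i ∈ range j, (x + i + (α + 1) + β + 1) :=
    prod_congr rfl fun i _ => by ring
  rw [hshift, hshift']
  push_cast
  ring

lemma nodeProd_succ_forward_diff (j : ℕ) (x : ℝ) :
    nodeProd α β (j + 1) (x + 1) - nodeProd α β (j + 1) x =
      (j + 1) * (2 * x + α + β + 2) * nodeProd (α + 1) β j x := by
  rw [nodeProd_succ_add_one, nodeProd_succ]; ring

end Nodes

def dualHahnCoeff (α N : ℝ) (n j : ℕ) : ℝ :=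
  (-1) ^ j * poch (-(n : ℝ)) j * poch (-N + j) (n - j) /
    (poch (α + 1) j * j.factorial * n.factorial)

lemma eval_lam_dualHahn (α β N : ℝ) (n : ℕ) (x : ℝ) :
    (dualHahn α β N n).eval (lam α β x) =
      ∑ j ∈ range (n + 1), dualHahnCoeff α N n j * nodeProd α β j x := by
  simp only [dualHahn, eval_mul, eval_C, eval_finsetSum, eval_prod, eval_sub, eval_X, mul_sum]
  refine sum_congr rfl fun j _ => ?_
  have hnodes : ∏ i ∈ range j, (lam α β x - (i : ℝ) * (α + β + 1 + i)) = nodeProd α β j x :=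
    prod_congr rfl fun i _ => by unfold lam; ring
  rw [hnodes, dualHahnCoeff]
  ring

lemma succ_mul_dualHahnCoeff_succ (α N : ℝ) (m j : ℕ) :
    (j + 1) * dualHahnCoeff α N (m + 1) (j + 1) = dualHahnCoeff (α + 1) (N - 1) m j / (α + 1) := by
  have hpoch : poch (-((m + 1 : ℕ) : ℝ)) (j + 1) = -(m + 1) * poch (-(m : ℝ)) j := by
    rw [poch_succ_left]; push_cast; ring_nf
  have hshift : poch (-N + (j + 1 : ℕ)) (m + 1 - (j + 1)) = poch (-(N - 1) + j) (m - j) := by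
    rw [Nat.add_sub_add_right]; push_cast; ring_nf
  simp only [dualHahnCoeff, hpoch, hshift, poch_succ_left (α + 1), Nat.factorial_succ]
  have hj : (j + 1 : ℝ) ≠ 0 := by positivity
  have hm : (m + 1 : ℝ) ≠ 0 := by positivity
  push_cast
  field_simp
  ring

theorem dualHahn_forward_shift_general (α β N : ℝ)
    (n : ℕ) (hn : 1 ≤ n) (x : ℝ) :
    (dualHahn α β N n).eval (lam α β (x + 1)) - (dualHahn α β N n).eval (lam α β x) =
    ((2 * x + α + β + 2) / (α + 1)) *
      (dualHahn (α + 1) β (N - 1) (n - 1)).eval (lam (α + 1) β x) := by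
  obtain ⟨m, rfl⟩ := Nat.exists_eq_add_of_le' hn
  rw [eval_lam_dualHahn, eval_lam_dualHahn, eval_lam_dualHahn, Nat.add_sub_cancel,
    ← sum_sub_distrib, sum_range_succ', mul_sum]
  simp only [← mul_sub, nodeProd_succ_forward_diff, nodeProd_zero, sub_self, add_zero]
  refine sum_congr rfl fun j _ => ?_
  linear_combination
    (2 * x + α + β + 2) * nodeProd (α + 1) β j x * succ_mul_dualHahnCoeff_succ α N m j

/-- Forward shift identity for dual Hahn polynomials:
`Δ_x R_n^{α,β,N}(λ(x)) = ((2x+α+β+2)/(α+1)) R_{n−1}^{α+1,β,N−1}(λ^{α+1,β}(x))`. -/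
theorem dualHahn_forward_shift (α β N : ℝ) (hα : ∀ k : ℕ, α ≠ -1 - k)
    (n : ℕ) (hn : 1 ≤ n) (x : ℝ) :
    (dualHahn α β N n).eval (lam α β (x + 1)) - (dualHahn α β N n).eval (lam α β x) =
    ((2 * x + α + β + 2) / (α + 1)) *
      (dualHahn (α + 1) β (N - 1) (n - 1)).eval (lam (α + 1) β x) :=
  dualHahn_forward_shift_general α β N n hn x

end
end
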